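/- arXiv:2603.05259 — 2 statements merged into one kernel-verified Lean document; each statement's English description precedes it below -/
import Mathlib

section
/- Let π₂ : B → A and π₃ : C → B be maps of finite nonempty types such that π₂ and π₃ are surjective (every node has at least one daughter). For d₂, d₃ ≥ 1 define S²_{d₃} = {b : B | |π₃⁻¹(b)| ≥ d₃} and S¹_{d₂,d₃} = {a : A | |π₂⁻¹(a) ∩ S²_{d₃}| ≥ d₂}. Then ∑_{d₂=1}^{M} ∑_{d₃=1}^{M} |S¹_{d₂,d₃}| = |C|, where M is any sufficiently large bound (e.g. M = |C|). -/
lemma key_layer {X : Type*} [Fintype X] (f : X → ℕ) (M : ℕ) (hf : ∀ x, f x ≤ M) :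
    ∑ d ∈ Finset.Icc 1 M, (Finset.univ.filter fun x => d ≤ f x).card = ∑ x, f x := by
  simp_rw [Finset.card_filter]
  rw [Finset.sum_comm]
  refine Finset.sum_congr rfl fun x _ => ?_
  rw [← Finset.card_filter]
  have : Finset.filter (fun d => d ≤ f x) (Finset.Icc 1 M) = Finset.Icc 1 (f x) := by
    ext d
    simp only [Finset.mem_filter, Finset.mem_Icc]
    constructor
    · rintro ⟨⟨h1, _⟩, h2⟩; exact ⟨h1, h2⟩
    · rintro ⟨h1, h2⟩; exact ⟨⟨h1, h2.trans (hf x)⟩, h2⟩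
  rw [this, Nat.card_Icc]
  omega

lemma fiber_sum {X Y : Type*} [Fintype X] [Fintype Y] [DecidableEq X] [DecidableEq Y] (f : X → Y)
    (S : Finset X) :
    ∑ y : Y, ((Finset.univ.filter fun x => f x = y) ∩ S).card = S.card := by
  have := Finset.card_eq_sum_card_fiberwise (f := f) (s := S) (t := Finset.univ)
    (fun x _ => Finset.mem_univ _)
  rw [this]
  refine Finset.sum_congr rfl fun y _ => ?_
  congr 1
  ext x
  simp [and_comm]

theorem stmt_3 (A B C : Type*) [Fintype A] [Fintype B] [Fintype C]
    [DecidableEq A] [DecidableEq B]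
    [Nonempty A] [Nonempty B] [Nonempty C]
    (π₂ : B → A) (π₃ : C → B)
    (h₂ : Function.Surjective π₂) (h₃ : Function.Surjective π₃)
    (M : ℕ) (hM : Fintype.card C ≤ M) :
    ∑ d₂ ∈ Finset.Icc 1 M, ∑ d₃ ∈ Finset.Icc 1 M,
      (Finset.univ.filter fun a : A =>
        d₂ ≤ ((Finset.univ.filter fun b : B => π₂ b = a) ∩
              (Finset.univ.filter fun b : B =>
                d₃ ≤ (Finset.univ.filter fun c : C => π₃ c = b).card)).card).card
      = Fintype.card C := by
  have hBC : Fintype.card B ≤ Fintype.card C := Fintype.card_le_of_surjective _ h₃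
  rw [Finset.sum_comm]
  have step1 : ∀ d₃ ∈ Finset.Icc 1 M,
      ∑ d₂ ∈ Finset.Icc 1 M,
        (Finset.univ.filter fun a : A =>
          d₂ ≤ ((Finset.univ.filter fun b : B => π₂ b = a) ∩
                (Finset.univ.filter fun b : B =>
                  d₃ ≤ (Finset.univ.filter fun c : C => π₃ c = b).card)).card).card
      = (Finset.univ.filter fun b : B =>
          d₃ ≤ (Finset.univ.filter fun c : C => π₃ c = b).card).card := by
    intro d₃ _
    rw [key_layer _ M (fun a => le_trans (le_trans (Finset.card_le_card
      (Finset.inter_subset_right)) (Finset.card_le_univ _)) (hBC.trans hM))]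
    exact fiber_sum π₂ _
  rw [Finset.sum_congr rfl step1]
  rw [key_layer _ M (fun b => le_trans (Finset.card_le_univ _) hM)]
  rw [Fintype.card, Finset.card_eq_sum_card_fiberwise (f := π₃)
    (s := Finset.univ) (t := Finset.univ) (fun x _ => Finset.mem_univ _)]
end

section
/- Let K be a field, R a commutative K-algebra, and Q₁, Q₂, Q₃, Q₄ ∈ R pairwise orthogonal idempotents with Q₁+Q₂+Q₃+Q₄ = 1. Let x₁ ≠ x₂ and y₁ ≠ y₂, y₃ ≠ y₄ in K, and set C₁ = x₁•(Q₁+Q₂) + x₂•(Q₃+Q₄) and C₂ = y₁•Q₁ + y₂•Q₂ + y₃•Q₃ + y₄•Q₄. Then each Q_i lies in the K-linear span of {1, C₁, C₂, C₁C₂}. -/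
private lemma mem4 {K R : Type*} [Field K] [CommRing R] [Algebra K R]
    (w₁ w₂ w₃ w₄ v : R) (a b c d : K)
    (h : v = a • w₁ + b • w₂ + c • w₃ + d • w₄) :
    v ∈ Submodule.span K ({w₁, w₂, w₃, w₄} : Set R) := by
  subst h
  refine add_mem (add_mem (add_mem ?_ ?_) ?_) ?_ <;>
    exact Submodule.smul_mem _ _ (Submodule.subset_span (by simp))

theorem stmt_9 (K : Type*) [Field K] (R : Type*) [CommRing R] [Algebra K R]
    (Q₁ Q₂ Q₃ Q₄ : R)
    (h12 : Q₁ * Q₂ = 0) (h13 : Q₁ * Q₃ = 0) (h14 : Q₁ * Q₄ = 0)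
    (h23 : Q₂ * Q₃ = 0) (h24 : Q₂ * Q₄ = 0) (h34 : Q₃ * Q₄ = 0)
    (hi1 : Q₁ * Q₁ = Q₁) (hi2 : Q₂ * Q₂ = Q₂) (hi3 : Q₃ * Q₃ = Q₃) (hi4 : Q₄ * Q₄ = Q₄)
    (hsum : Q₁ + Q₂ + Q₃ + Q₄ = 1)
    (x₁ x₂ y₁ y₂ y₃ y₄ : K)
    (hx : x₁ ≠ x₂) (hy12 : y₁ ≠ y₂) (hy34 : y₃ ≠ y₄)
    (C₁ C₂ : R)
    (hC₁ : C₁ = x₁ • (Q₁ + Q₂) + x₂ • (Q₃ + Q₄))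
    (hC₂ : C₂ = y₁ • Q₁ + y₂ • Q₂ + y₃ • Q₃ + y₄ • Q₄) :
    Q₁ ∈ Submodule.span K ({1, C₁, C₂, C₁ * C₂} : Set R) ∧
    Q₂ ∈ Submodule.span K ({1, C₁, C₂, C₁ * C₂} : Set R) ∧
    Q₃ ∈ Submodule.span K ({1, C₁, C₂, C₁ * C₂} : Set R) ∧
    Q₄ ∈ Submodule.span K ({1, C₁, C₂, C₁ * C₂} : Set R) := by
  have h21 : Q₂ * Q₁ = 0 := by rw [mul_comm]; exact h12
  have h31 : Q₃ * Q₁ = 0 := by rw [mul_comm]; exact h13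
  have h41 : Q₄ * Q₁ = 0 := by rw [mul_comm]; exact h14
  have h32 : Q₃ * Q₂ = 0 := by rw [mul_comm]; exact h23
  have h42 : Q₄ * Q₂ = 0 := by rw [mul_comm]; exact h24
  have h43 : Q₄ * Q₃ = 0 := by rw [mul_comm]; exact h34
  have hprod : C₁ * C₂ = (x₁*y₁) • Q₁ + (x₁*y₂) • Q₂ + (x₂*y₃) • Q₃ + (x₂*y₄) • Q₄ := by
    rw [hC₁, hC₂]
    simp only [smul_add, add_mul, mul_add, smul_mul_smul_comm,
      hi1, hi2, hi3, hi4, h12, h13, h14, h23, h24, h34,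
      h21, h31, h41, h32, h42, h43, smul_zero, add_zero, zero_add]
  have hu : x₁ - x₂ ≠ 0 := sub_ne_zero.mpr hx
  have hu' : x₂ - x₁ ≠ 0 := sub_ne_zero.mpr hx.symm
  have hv12 : y₁ - y₂ ≠ 0 := sub_ne_zero.mpr hy12
  have hv21 : y₂ - y₁ ≠ 0 := sub_ne_zero.mpr hy12.symm
  have hv34 : y₃ - y₄ ≠ 0 := sub_ne_zero.mpr hy34
  have hv43 : y₄ - y₃ ≠ 0 := sub_ne_zero.mpr hy34.symm
  refine ⟨?_, ?_, ?_, ?_⟩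
  · refine mem4 _ _ _ _ _
      (((x₁-x₂)*(y₁-y₂))⁻¹ * (x₂*y₂)) (-(((x₁-x₂)*(y₁-y₂))⁻¹ * y₂))
      (-(((x₁-x₂)*(y₁-y₂))⁻¹ * x₂)) (((x₁-x₂)*(y₁-y₂))⁻¹) ?_
    rw [hprod, hC₁, hC₂, ← hsum]
    match_scalars <;> field_simp <;> ring
  · refine mem4 _ _ _ _ _
      (((x₁-x₂)*(y₂-y₁))⁻¹ * (x₂*y₁)) (-(((x₁-x₂)*(y₂-y₁))⁻¹ * y₁))
      (-(((x₁-x₂)*(y₂-y₁))⁻¹ * x₂)) (((x₁-x₂)*(y₂-y₁))⁻¹) ?_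
    rw [hprod, hC₁, hC₂, ← hsum]
    match_scalars <;> field_simp <;> ring
  · refine mem4 _ _ _ _ _
      (((x₂-x₁)*(y₃-y₄))⁻¹ * (x₁*y₄)) (-(((x₂-x₁)*(y₃-y₄))⁻¹ * y₄))
      (-(((x₂-x₁)*(y₃-y₄))⁻¹ * x₁)) (((x₂-x₁)*(y₃-y₄))⁻¹) ?_
    rw [hprod, hC₁, hC₂, ← hsum]
    match_scalars <;> field_simp <;> ring
  · refine mem4 _ _ _ _ _
      (((x₂-x₁)*(y₄-y₃))⁻¹ * (x₁*y₃)) (-(((x₂-x₁)*(y₄-y₃))⁻¹ * y₃))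
      (-(((x₂-x₁)*(y₄-y₃))⁻¹ * x₁)) (((x₂-x₁)*(y₄-y₃))⁻¹) ?_
    rw [hprod, hC₁, hC₂, ← hsum]
    match_scalars <;> field_simp <;> ring
end
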